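/- arXiv:1909.04746 — 2 statements merged into one kernel-verified Lean document; each statement's English description precedes it below -/
import Mathlib

section
/- Let f_1, ..., f_M : ℝ^d → ℝ with f_m(x) = E_{z∼D_m}[f_m(x,z)], each f_m(·,z) almost surely L-smooth and convex, let f = (1/M) Σ_m f_m with minimizer x_*, and let M ≥ 2. Let x^1, ..., x^M ∈ ℝ^d with average x̂ and V = (1/M) Σ_m ‖x^m - x̂‖², and let z_1, ..., z_M be independent with z_m ∼ D_m. Then E‖(1/M) Σ_{m=1}^M ∇f_m(x^m, z_m)‖² ≤ 2L²V + 8L·D_f(x̂, x_*) + 4σ_dif²/M, where σ_dif² = (1/M) Σ_m E_{z_m∼D_m}‖∇f_m(x_*, z_m)‖² and D_f(x,y) = f(x) - f(y) - ⟨∇f(y), x - y⟩. -/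
open MeasureTheory ProbabilityTheory Finset
open scoped InnerProductSpace

/-!
Split each stochastic gradient at `x m` as
`(∇F_m(x m) - ∇F_m(x̂)) + (∇F_m(x̂) - ∇F_m(x⋆)) + ∇F_m(x⋆)` and use
`‖a + b + c‖² ≤ 2‖a‖² + 4‖b‖² + 4‖c‖²` together with Jensen's inequality for averages.
The first part is controlled by the Lipschitz continuity of the gradients, the second by
co-coercivity `‖∇g u - ∇g v‖² ≤ 2L D_g(u, v)` of smooth convex functions; in expectation the
Bregman divergences of the `F_m` average to `D_f(x̂, x⋆)`. The last part has mean
`∑ ∇f_m(x⋆) = M ∇f(x⋆) = 0`, since `f` is smooth and minimised at `x⋆`, so by independence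
its second moment is the sum of the individual second moments, i.e. `σ_dif² / M`.
-/

/-- `f : ℝ^d → ℝ` is `L`-smooth and `μ`-strongly convex (`μ = 0` meaning merely convex),
witnessed by the gradient map `df`:
`(μ/2)‖x - y‖² ≤ f x - f y - ⟪df y, x - y⟫ ≤ (L/2)‖x - y‖²` for all `x, y`. -/
def SmoothSC {d : ℕ} (L μ : ℝ) (f : EuclideanSpace ℝ (Fin d) → ℝ)
    (df : EuclideanSpace ℝ (Fin d) → EuclideanSpace ℝ (Fin d)) : Prop :=
  ∀ x y : EuclideanSpace ℝ (Fin d),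
    μ / 2 * ‖x - y‖ ^ 2 ≤ f x - f y - ⟪df y, x - y⟫_ℝ ∧
    f x - f y - ⟪df y, x - y⟫_ℝ ≤ L / 2 * ‖x - y‖ ^ 2

/-- The Bregman divergence `D_f(x, y) = f x - f y - ⟪∇f y, x - y⟫` of `f`,
with gradient map `df`. -/
noncomputable def Breg {d : ℕ} (f : EuclideanSpace ℝ (Fin d) → ℝ)
    (df : EuclideanSpace ℝ (Fin d) → EuclideanSpace ℝ (Fin d))
    (x y : EuclideanSpace ℝ (Fin d)) : ℝ :=
  f x - f y - ⟪df y, x - y⟫_ℝ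

theorem norm_add_add_sq_le {F : Type*} [SeminormedAddCommGroup F] (p q r : F) :
    ‖p + q + r‖ ^ 2 ≤ 2 * ‖p‖ ^ 2 + 4 * ‖q‖ ^ 2 + 4 * ‖r‖ ^ 2 :=
  calc ‖p + q + r‖ ^ 2 ≤ (‖p‖ + ‖q + r‖) ^ 2 := by
        rw [add_assoc]; gcongr; exact norm_add_le _ _
    _ ≤ 2 * (‖p‖ ^ 2 + ‖q + r‖ ^ 2) := add_sq_le
    _ ≤ 2 * (‖p‖ ^ 2 + 2 * (‖q‖ ^ 2 + ‖r‖ ^ 2)) := by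
        gcongr; exact (pow_le_pow_left₀ (norm_nonneg _) (norm_add_le q r) 2).trans add_sq_le
    _ = 2 * ‖p‖ ^ 2 + 4 * ‖q‖ ^ 2 + 4 * ‖r‖ ^ 2 := by ring

theorem norm_inv_card_smul_sum_sq_le {ι F : Type*} [Fintype ι] [SeminormedAddCommGroup F]
    [NormedSpace ℝ F] (a : ι → F) :
    ‖(Fintype.card ι : ℝ)⁻¹ • ∑ i, a i‖ ^ 2 ≤ (Fintype.card ι : ℝ)⁻¹ * ∑ i, ‖a i‖ ^ 2 := by
  set n := (Fintype.card ι : ℝ)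
  have hsum : ‖∑ i, a i‖ ^ 2 ≤ n * ∑ i, ‖a i‖ ^ 2 :=
    calc ‖∑ i, a i‖ ^ 2 ≤ (∑ i, ‖a i‖) ^ 2 := by gcongr; exact norm_sum_le _ _
      _ ≤ n * ∑ i, ‖a i‖ ^ 2 := by simpa using sq_sum_le_card_mul_sum_sq (s := univ) (f := (‖a ·‖))
  calc ‖n⁻¹ • ∑ i, a i‖ ^ 2 = n⁻¹ ^ 2 * ‖∑ i, a i‖ ^ 2 := by
        rw [norm_smul, mul_pow, Real.norm_of_nonneg (by positivity)]
    _ ≤ n⁻¹ ^ 2 * (n * ∑ i, ‖a i‖ ^ 2) := by gcongr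
    _ = n⁻¹ * ∑ i, ‖a i‖ ^ 2 := by
        rcases eq_or_ne n 0 with hn | hn
        · simp [hn]
        · field_simp

section Variance

variable {ι Ω H : Type*} [Fintype ι] [NormedAddCommGroup H] [InnerProductSpace ℝ H]

theorem norm_sum_sq_eq_sum_sum_inner (a : ι → H) :
    ‖∑ i, a i‖ ^ 2 = ∑ i, ∑ j, ⟪a i, a j⟫_ℝ := by
  simp_rw [← real_inner_self_eq_norm_sq, sum_inner, inner_sum]

variable [CompleteSpace H] [MeasurableSpace H] [BorelSpace H] [MeasurableSpace Ω]
  {P : Measure Ω} [IsFiniteMeasure P] {Y : ι → Ω → H}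

theorem integral_norm_sum_sq_of_iIndepFun (hY : iIndepFun Y P) (hL2 : ∀ i, MemLp (Y i) 2 P) :
    ∫ ω, ‖∑ i, Y i ω‖ ^ 2 ∂P =
      ∑ i, (∫ ω, ‖Y i ω‖ ^ 2 ∂P - ‖∫ ω, Y i ω ∂P‖ ^ 2) + ‖∑ i, ∫ ω, Y i ω ∂P‖ ^ 2 := by
  classical
  have hint (i : ι) : Integrable (Y i) P := (hL2 i).integrable one_le_two
  have hinner (i j : ι) : Integrable (fun ω => ⟪Y i ω, Y j ω⟫_ℝ) P :=
    ((hL2 i).norm.integrable_mul (hL2 j).norm).mono' ((hL2 i).1.inner (hL2 j).1)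
      (ae_of_all _ fun ω => norm_inner_le_norm _ _)
  have hcross (i j : ι) : ∫ ω, ⟪Y i ω, Y j ω⟫_ℝ ∂P = ⟪∫ ω, Y i ω ∂P, ∫ ω, Y j ω ∂P⟫_ℝ +
      if i = j then ∫ ω, ‖Y i ω‖ ^ 2 ∂P - ‖∫ ω, Y i ω ∂P‖ ^ 2 else 0 := by
    by_cases hij : i = j
    · subst hij
      simp
    · rw [if_neg hij, add_zero]
      exact (hY.indepFun hij).integral_bilin (hint i) (hint j) (innerSL ℝ)
  calc ∫ ω, ‖∑ i, Y i ω‖ ^ 2 ∂P = ∑ i, ∑ j, ∫ ω, ⟪Y i ω, Y j ω⟫_ℝ ∂P := by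
        simp_rw [norm_sum_sq_eq_sum_sum_inner]
        rw [integral_finsetSum _ fun i _ => integrable_finsetSum _ fun j _ => hinner i j]
        exact sum_congr rfl fun i _ => integral_finsetSum _ fun j _ => hinner i j
    _ = _ := by
        simp only [hcross, sum_add_distrib, sum_ite_eq, mem_univ, if_true,
          norm_sum_sq_eq_sum_sum_inner (fun i => ∫ ω, Y i ω ∂P)]
        ring

theorem integral_norm_average_sq_le_of_iIndepFun (hY : iIndepFun Y P)
    (hL2 : ∀ i, MemLp (Y i) 2 P) (hmean : ∑ i, ∫ ω, Y i ω ∂P = 0) :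
    ∫ ω, ‖(Fintype.card ι : ℝ)⁻¹ • ∑ i, Y i ω‖ ^ 2 ∂P ≤
      (Fintype.card ι : ℝ)⁻¹ ^ 2 * ∑ i, ∫ ω, ‖Y i ω‖ ^ 2 ∂P := by
  simp_rw [norm_smul, mul_pow, norm_inv, Real.norm_natCast]
  rw [integral_const_mul, integral_norm_sum_sq_of_iIndepFun hY hL2, hmean, norm_zero,
    zero_pow two_ne_zero, add_zero]
  gcongr
  exact sub_le_self _ (sq_nonneg _)

end Variance

theorem MeasureTheory.MeasurePreserving.integral_comp_of_aestronglyMeasurable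
    {α β G : Type*} [MeasurableSpace α] [MeasurableSpace β] [NormedAddCommGroup G]
    [NormedSpace ℝ G] {μ : Measure α} {ν : Measure β} {f : α → β} (hf : MeasurePreserving f μ ν)
    {g : β → G} (hg : AEStronglyMeasurable g ν) :
    ∫ x, g (f x) ∂μ = ∫ y, g y ∂ν := by
  rw [← hf.map_eq] at hg ⊢
  exact (integral_map hf.measurable.aemeasurable hg).symm

section Bregman

variable {d : ℕ}

local notation "E" => EuclideanSpace ℝ (Fin d)

theorem smoothSC_iff_breg {L μ : ℝ} {f : E → ℝ} {df : E → E} :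
    SmoothSC L μ f df ↔
      ∀ x y, μ / 2 * ‖x - y‖ ^ 2 ≤ Breg f df x y ∧ Breg f df x y ≤ L / 2 * ‖x - y‖ ^ 2 :=
  Iff.rfl

theorem breg_smul_sum {ι : Type*} (s : Finset ι) (c : ℝ) (f : ι → E → ℝ) (df : ι → E → E)
    (u v : E) :
    Breg (fun x => c * ∑ i ∈ s, f i x) (fun x => c • ∑ i ∈ s, df i x) u v =
      c * ∑ i ∈ s, Breg (f i) (df i) u v := by
  simp only [Breg, real_inner_smul_left, sum_inner, Finset.sum_sub_distrib]
  ring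

theorem SmoothSC.norm_sub_sq_le_breg {L : ℝ} (hL : 0 < L) {F : E → ℝ} {dF : E → E}
    (h : SmoothSC L 0 F dF) (u v : E) :
    ‖dF u - dF v‖ ^ 2 ≤ 2 * L * Breg F dF u v := by
  set g := dF u - dF v
  -- Convexity seen from `v` and smoothness seen from `u`, both at the gradient step `u - g / L`.
  have hlow := (h (u - L⁻¹ • g) v).1
  have hup := (h (u - L⁻¹ • g) u).2
  rw [sub_right_comm, inner_sub_right, real_inner_smul_right] at hlow
  rw [sub_sub_cancel_left, inner_neg_right, real_inner_smul_right, norm_neg,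
    norm_smul, Real.norm_eq_abs, abs_inv, abs_of_pos hL] at hup
  have hB : L⁻¹ * ‖g‖ ^ 2 - L / 2 * (L⁻¹ * ‖g‖) ^ 2 ≤ Breg F dF u v := by
    rw [Breg, ← real_inner_self_eq_norm_sq, inner_sub_left]
    linarith
  calc ‖g‖ ^ 2 = 2 * L * (L⁻¹ * ‖g‖ ^ 2 - L / 2 * (L⁻¹ * ‖g‖) ^ 2) := by field_simp; ring
    _ ≤ 2 * L * Breg F dF u v := by gcongr

theorem SmoothSC.norm_sub_sq_le {L : ℝ} (hL : 0 < L) {F : E → ℝ} {dF : E → E}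
    (h : SmoothSC L 0 F dF) (u v : E) :
    ‖dF u - dF v‖ ^ 2 ≤ L ^ 2 * ‖u - v‖ ^ 2 :=
  calc ‖dF u - dF v‖ ^ 2 ≤ 2 * L * Breg F dF u v := h.norm_sub_sq_le_breg hL u v
    _ ≤ 2 * L * (L / 2 * ‖u - v‖ ^ 2) := by gcongr; exact (h u v).2
    _ = L ^ 2 * ‖u - v‖ ^ 2 := by ring

theorem SmoothSC.grad_eq_zero_of_forall_le {L μ : ℝ} {f : E → ℝ} {df : E → E}
    (h : SmoothSC L μ f df) {x : E} (hmin : ∀ y, f x ≤ f y) : df x = 0 := by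
  -- `1 / (|L| + 1)` is a descent step whatever the sign of `L`.
  set c := |L| + 1
  have hc : 0 < c := by positivity
  have hup := (h (x - c⁻¹ • df x) x).2
  rw [sub_sub_cancel_left, inner_neg_right, real_inner_smul_right, real_inner_self_eq_norm_sq,
    norm_neg, norm_smul, Real.norm_eq_abs, abs_inv, abs_of_pos hc] at hup
  have hdescent : c⁻¹ * ‖df x‖ ^ 2 ≤ c⁻¹ * ‖df x‖ ^ 2 / 2 :=
    calc c⁻¹ * ‖df x‖ ^ 2 ≤ L / 2 * (c⁻¹ * ‖df x‖) ^ 2 := by linarith [hmin (x - c⁻¹ • df x)]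
      _ ≤ c / 2 * (c⁻¹ * ‖df x‖) ^ 2 := by gcongr; exact (le_abs_self L).trans (lt_add_one _).le
      _ = c⁻¹ * ‖df x‖ ^ 2 / 2 := by field_simp
  have hsq : ‖df x‖ ^ 2 ≤ 0 := by
    have : c⁻¹ * ‖df x‖ ^ 2 ≤ c⁻¹ * 0 := by linarith
    exact le_of_mul_le_mul_left this (inv_pos.2 hc)
  simpa using hsq

theorem SmoothSC.average {ι : Type*} [Fintype ι] [Nonempty ι] {L μ : ℝ} {f : ι → E → ℝ}
    {df : ι → E → E} (h : ∀ i, SmoothSC L μ (f i) (df i)) :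
    SmoothSC L μ (fun x => (Fintype.card ι : ℝ)⁻¹ * ∑ i, f i x)
      (fun x => (Fintype.card ι : ℝ)⁻¹ • ∑ i, df i x) := by
  have havg (a : ℝ) : (Fintype.card ι : ℝ)⁻¹ * ∑ _i : ι, a = a := by
    rw [sum_const, card_univ, nsmul_eq_mul, inv_mul_cancel_left₀ (by positivity)]
  refine smoothSC_iff_breg.2 fun u v => ?_
  rw [breg_smul_sum]
  constructor
  · calc μ / 2 * ‖u - v‖ ^ 2 = (Fintype.card ι : ℝ)⁻¹ * ∑ _i : ι, μ / 2 * ‖u - v‖ ^ 2 :=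
          (havg _).symm
      _ ≤ _ := by gcongr with i; exact (h i u v).1
  · calc _ ≤ (Fintype.card ι : ℝ)⁻¹ * ∑ _i : ι, L / 2 * ‖u - v‖ ^ 2 := by
          gcongr with i; exact (h i u v).2
      _ = L / 2 * ‖u - v‖ ^ 2 := havg _

theorem norm_average_grad_sq_le {ι : Type*} [Fintype ι] {L : ℝ} (hL : 0 < L) {F : ι → E → ℝ}
    {dF : ι → E → E} (h : ∀ i, SmoothSC L 0 (F i) (dF i)) (x : ι → E) (xhat xstar : E) :
    ‖(Fintype.card ι : ℝ)⁻¹ • ∑ i, dF i (x i)‖ ^ 2 ≤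
      2 * L ^ 2 * ((Fintype.card ι : ℝ)⁻¹ * ∑ i, ‖x i - xhat‖ ^ 2) +
        8 * L * ((Fintype.card ι : ℝ)⁻¹ * ∑ i, Breg (F i) (dF i) xhat xstar) +
        4 * ‖(Fintype.card ι : ℝ)⁻¹ • ∑ i, dF i xstar‖ ^ 2 := by
  set n := (Fintype.card ι : ℝ)
  have hsplit : n⁻¹ • ∑ i, dF i (x i) = n⁻¹ • ∑ i, (dF i (x i) - dF i xhat) +
      n⁻¹ • ∑ i, (dF i xhat - dF i xstar) + n⁻¹ • ∑ i, dF i xstar := by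
    simp only [← smul_add, ← sum_add_distrib, sub_add_sub_cancel, sub_add_cancel]
  calc ‖n⁻¹ • ∑ i, dF i (x i)‖ ^ 2
      ≤ 2 * ‖n⁻¹ • ∑ i, (dF i (x i) - dF i xhat)‖ ^ 2 +
          4 * ‖n⁻¹ • ∑ i, (dF i xhat - dF i xstar)‖ ^ 2 + 4 * ‖n⁻¹ • ∑ i, dF i xstar‖ ^ 2 :=
        hsplit ▸ norm_add_add_sq_le _ _ _
    _ ≤ 2 * (n⁻¹ * ∑ i, ‖dF i (x i) - dF i xhat‖ ^ 2) +
          4 * (n⁻¹ * ∑ i, ‖dF i xhat - dF i xstar‖ ^ 2) + 4 * ‖n⁻¹ • ∑ i, dF i xstar‖ ^ 2 := by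
        gcongr <;> exact norm_inv_card_smul_sum_sq_le _
    _ ≤ 2 * (n⁻¹ * ∑ i, L ^ 2 * ‖x i - xhat‖ ^ 2) +
          4 * (n⁻¹ * ∑ i, 2 * L * Breg (F i) (dF i) xhat xstar) +
          4 * ‖n⁻¹ • ∑ i, dF i xstar‖ ^ 2 := by
        gcongr
        · exact (h _).norm_sub_sq_le hL _ _
        · exact (h _).norm_sub_sq_le_breg hL _ _
    _ = _ := by simp only [← mul_sum]; ring

section Expectation

variable {Z : Type*} [MeasurableSpace Z] {ν : Measure Z}

theorem integrable_breg {F : E → Z → ℝ} {dF : E → Z → E} {u v : E} (hFu : Integrable (F u) ν)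
    (hFv : Integrable (F v) ν) (hdFv : Integrable (dF v) ν) :
    Integrable (fun w => Breg (F · w) (dF · w) u v) ν :=
  (hFu.sub hFv).sub (hdFv.inner_const _)

theorem integral_breg {F : E → Z → ℝ} {dF : E → Z → E} {u v : E} (hFu : Integrable (F u) ν)
    (hFv : Integrable (F v) ν) (hdFv : Integrable (dF v) ν) :
    ∫ w, Breg (F · w) (dF · w) u v ∂ν =
      Breg (fun x => ∫ w, F x w ∂ν) (fun x => ∫ w, dF x w ∂ν) u v := by
  have hdiff : Integrable (fun w => F u w - F v w) ν := hFu.sub hFv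
  simp only [Breg]
  rw [integral_sub hdiff (hdFv.inner_const _), integral_sub hFu hFv]
  simp_rw [real_inner_comm (u - v)]
  rw [integral_inner hdFv]

theorem SmoothSC.integral [IsProbabilityMeasure ν] {L μ : ℝ} {F : E → Z → ℝ} {dF : E → Z → E}
    (h : ∀ᵐ w ∂ν, SmoothSC L μ (F · w) (dF · w)) (hF : ∀ x, Integrable (F x) ν)
    (hdF : ∀ x, Integrable (dF x) ν) :
    SmoothSC L μ (fun x => ∫ w, F x w ∂ν) (fun x => ∫ w, dF x w ∂ν) := by
  refine smoothSC_iff_breg.2 fun u v => ?_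
  have hint := integrable_breg (hF u) (hF v) (hdF v)
  rw [← integral_breg (hF u) (hF v) (hdF v)]
  constructor
  · calc μ / 2 * ‖u - v‖ ^ 2 = ∫ _w, μ / 2 * ‖u - v‖ ^ 2 ∂ν := by simp
      _ ≤ _ := integral_mono_ae (integrable_const _) hint (h.mono fun w hw => (hw u v).1)
  · calc _ ≤ ∫ _w, L / 2 * ‖u - v‖ ^ 2 ∂ν :=
          integral_mono_ae hint (integrable_const _) (h.mono fun w hw => (hw u v).2)
      _ = L / 2 * ‖u - v‖ ^ 2 := by simp

theorem integral_norm_average_grad_sq_le [IsProbabilityMeasure ν] {ι : Type*} [Fintype ι] {L : ℝ}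
    (hL : 0 < L) {F : ι → E → Z → ℝ} {dF : ι → E → Z → E} (x : ι → E) (xhat xstar : E)
    (h : ∀ᵐ w ∂ν, ∀ i, SmoothSC L 0 (F i · w) (dF i · w)) (hF : ∀ i y, Integrable (F i y) ν)
    (hdF : ∀ i, MemLp (dF i xstar) 2 ν) :
    ∫ w, ‖(Fintype.card ι : ℝ)⁻¹ • ∑ i, dF i (x i) w‖ ^ 2 ∂ν ≤
      2 * L ^ 2 * ((Fintype.card ι : ℝ)⁻¹ * ∑ i, ‖x i - xhat‖ ^ 2) +
        8 * L * ((Fintype.card ι : ℝ)⁻¹ * ∑ i,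
          Breg (fun y => ∫ w, F i y w ∂ν) (fun y => ∫ w, dF i y w ∂ν) xhat xstar) +
        4 * ∫ w, ‖(Fintype.card ι : ℝ)⁻¹ • ∑ i, dF i xstar w‖ ^ 2 ∂ν := by
  set n := (Fintype.card ι : ℝ)
  have hdFint (i : ι) : Integrable (dF i xstar) ν := (hdF i).integrable one_le_two
  have hbreg (i : ι) := integrable_breg (hF i xhat) (hF i xstar) (hdFint i)
  have hbregs : Integrable
      (fun w => 8 * L * (n⁻¹ * ∑ i, Breg (F i · w) (dF i · w) xhat xstar)) ν :=
    ((integrable_finsetSum _ fun i _ => hbreg i).const_mul _).const_mul _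
  have hdet : Integrable (fun w => 2 * L ^ 2 * (n⁻¹ * ∑ i, ‖x i - xhat‖ ^ 2) +
      8 * L * (n⁻¹ * ∑ i, Breg (F i · w) (dF i · w) xhat xstar)) ν :=
    (integrable_const _).add hbregs
  have hnoise : Integrable (fun w => 4 * ‖n⁻¹ • ∑ i, dF i xstar w‖ ^ 2) ν :=
    (((memLp_finsetSum univ fun i _ => hdF i).const_smul n⁻¹).integrable_norm_pow
      two_ne_zero).const_mul _
  calc ∫ w, ‖n⁻¹ • ∑ i, dF i (x i) w‖ ^ 2 ∂ν
      ≤ ∫ w, (2 * L ^ 2 * (n⁻¹ * ∑ i, ‖x i - xhat‖ ^ 2) +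
          8 * L * (n⁻¹ * ∑ i, Breg (F i · w) (dF i · w) xhat xstar) +
          4 * ‖n⁻¹ • ∑ i, dF i xstar w‖ ^ 2) ∂ν :=
        integral_mono_of_nonneg (ae_of_all _ fun _ => sq_nonneg _)
          (hdet.add hnoise)
          (h.mono fun w hw => norm_average_grad_sq_le hL hw x xhat xstar)
    _ = 2 * L ^ 2 * (n⁻¹ * ∑ i, ‖x i - xhat‖ ^ 2) +
          8 * L * (n⁻¹ * ∑ i, ∫ w, Breg (F i · w) (dF i · w) xhat xstar ∂ν) +
          4 * ∫ w, ‖n⁻¹ • ∑ i, dF i xstar w‖ ^ 2 ∂ν := by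
        rw [integral_add hdet hnoise,
          integral_add (integrable_const _) hbregs, integral_const, probReal_univ, one_smul,
          integral_const_mul, integral_const_mul, integral_const_mul,
          integral_finsetSum _ fun i _ => hbreg i]
    _ = _ := by
        simp only [integral_breg (hF _ xhat) (hF _ xstar) (hdFint _)]

theorem integral_norm_average_grad_sq_le_of_iIndepFun [IsProbabilityMeasure ν] {ι : Type*}
    [Fintype ι] [Nonempty ι] {L : ℝ} (hL : 0 < L) {F : ι → E → Z → ℝ} {dF : ι → E → Z → E}
    {f : E → ℝ} {df : E → E} (x : ι → E) (xhat xstar : E)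
    (h : ∀ᵐ w ∂ν, ∀ i, SmoothSC L 0 (F i · w) (dF i · w)) (hF : ∀ i y, Integrable (F i y) ν)
    (hdF : ∀ i y, MemLp (dF i y) 2 ν) (hindep : iIndepFun (fun i => dF i xstar) ν)
    (hf : ∀ y, f y = (Fintype.card ι : ℝ)⁻¹ * ∑ i, ∫ w, F i y w ∂ν)
    (hdf : ∀ y, df y = (Fintype.card ι : ℝ)⁻¹ • ∑ i, ∫ w, dF i y w ∂ν)
    (hmin : ∀ y, f xstar ≤ f y) :
    ∫ w, ‖(Fintype.card ι : ℝ)⁻¹ • ∑ i, dF i (x i) w‖ ^ 2 ∂ν ≤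
      2 * L ^ 2 * ((Fintype.card ι : ℝ)⁻¹ * ∑ i, ‖x i - xhat‖ ^ 2) +
        8 * L * Breg f df xhat xstar +
        4 * ((Fintype.card ι : ℝ)⁻¹ ^ 2 * ∑ i, ∫ w, ‖dF i xstar w‖ ^ 2 ∂ν) := by
  obtain rfl := funext hf
  obtain rfl := funext hdf
  have hsmooth := SmoothSC.average fun i => SmoothSC.integral (h.mono fun w hw => hw i) (hF i)
    fun y => (hdF i y).integrable one_le_two
  have hmean : ∑ i, ∫ w, dF i xstar w ∂ν = 0 := by
    have := hsmooth.grad_eq_zero_of_forall_le hmin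
    exact (smul_eq_zero.1 this).resolve_left (by positivity)
  rw [breg_smul_sum]
  refine (integral_norm_average_grad_sq_le hL x xhat xstar h hF (hdF · xstar)).trans ?_
  gcongr
  exact integral_norm_average_sq_le_of_iIndepFun hindep (hdF · xstar) hmean

end Expectation

theorem average_gradient_bound_heterogeneous_general {d M : ℕ} (hM : 2 ≤ M) (L : ℝ) (hL : 0 < L) {Z : Type*} [MeasurableSpace Z] {Ω : Type*} [MeasurableSpace Ω]
    (P : Measure Ω) [IsProbabilityMeasure P]
    (D : Fin M → Measure Z)
    (FM : Fin M → EuclideanSpace ℝ (Fin d) → Z → ℝ) (dFM : Fin M → EuclideanSpace ℝ (Fin d) → Z → EuclideanSpace ℝ (Fin d))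
    (fm : Fin M → EuclideanSpace ℝ (Fin d) → ℝ) (dfm : Fin M → EuclideanSpace ℝ (Fin d) → EuclideanSpace ℝ (Fin d))
    (hsmooth : ∀ m, ∀ᵐ z ∂(D m), SmoothSC L 0 (fun x => FM m x z) (fun x => dFM m x z))
    (hfm : ∀ m x, fm m x = ∫ z, FM m x z ∂(D m))
    (hdfm : ∀ m x, dfm m x = ∫ z, dFM m x z ∂(D m))
    (hdFjm : ∀ m, Measurable (fun p : EuclideanSpace ℝ (Fin d) × Z => dFM m p.1 p.2))
    (hFint : ∀ m x, Integrable (fun z => FM m x z) (D m))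
    (hdFsq : ∀ m x, Integrable (fun z => ‖dFM m x z‖ ^ 2) (D m))
    (f : EuclideanSpace ℝ (Fin d) → ℝ) (df : EuclideanSpace ℝ (Fin d) → EuclideanSpace ℝ (Fin d))
    (hfdef : ∀ x, f x = (M : ℝ)⁻¹ * ∑ m, fm m x)
    (hdfdef : ∀ x, df x = (M : ℝ)⁻¹ • ∑ m, dfm m x)
    (xstar : EuclideanSpace ℝ (Fin d)) (hmin : ∀ y, f xstar ≤ f y)
    (z : Fin M → Ω → Z) (hz : ∀ m, Measurable (z m))
    (hindep : iIndepFun z P)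
    (hlaw : ∀ m, P.map (z m) = D m)
    (sdif2 : ℝ)
    (hsdif2 : sdif2 = (M : ℝ)⁻¹ * ∑ m, ∫ w, ‖dFM m xstar w‖ ^ 2 ∂(D m))
    (x : Fin M → EuclideanSpace ℝ (Fin d))
    (xhat : EuclideanSpace ℝ (Fin d))
    (Vdev : ℝ) (hV : Vdev = (M : ℝ)⁻¹ * ∑ m, ‖x m - xhat‖ ^ 2) :
    (∫ ω, ‖(M : ℝ)⁻¹ • ∑ m, dFM m (x m) (z m ω)‖ ^ 2 ∂P) ≤
      2 * L ^ 2 * Vdev + 8 * L * Breg f df xhat xstar + 4 * sdif2 / M := by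
  have hpres (m : Fin M) : MeasurePreserving (z m) P (D m) := ⟨hz m, hlaw m⟩
  have hdF_meas (m : Fin M) (y : EuclideanSpace ℝ (Fin d)) : Measurable (dFM m y) :=
    (hdFjm m).comp (measurable_const.prodMk measurable_id)
  have hL2 (m : Fin M) (y : EuclideanSpace ℝ (Fin d)) :
      MemLp (fun ω => dFM m y (z m ω)) 2 P :=
    ((memLp_two_iff_integrable_sq_norm (hdF_meas m y).aestronglyMeasurable).2
      (hdFsq m y)).comp_measurePreserving (hpres m)
  have hfP (m : Fin M) (y : EuclideanSpace ℝ (Fin d)) : fm m y = ∫ ω, FM m y (z m ω) ∂P := by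
    rw [hfm, (hpres m).integral_comp_of_aestronglyMeasurable (hFint m y).1]
  have hdfP (m : Fin M) (y : EuclideanSpace ℝ (Fin d)) : dfm m y = ∫ ω, dFM m y (z m ω) ∂P := by
    rw [hdfm, (hpres m).integral_comp_of_aestronglyMeasurable (hdF_meas m y).aestronglyMeasurable]
  have hsmoothP : ∀ᵐ ω ∂P, ∀ m, SmoothSC L 0 (FM m · (z m ω)) (dFM m · (z m ω)) :=
    ae_all_iff.2 fun m => (hpres m).quasiMeasurePreserving.ae (hsmooth m)
  have hFP (m : Fin M) (y : EuclideanSpace ℝ (Fin d)) : Integrable (fun ω => FM m y (z m ω)) P :=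
    (hpres m).integrable_comp_of_integrable (hFint m y)
  have hsecond (m : Fin M) : ∫ ω, ‖dFM m xstar (z m ω)‖ ^ 2 ∂P = ∫ w, ‖dFM m xstar w‖ ^ 2 ∂(D m) :=
    (hpres m).integral_comp_of_aestronglyMeasurable
      ((hdF_meas m xstar).norm.pow_const 2).aestronglyMeasurable
  have : Nonempty (Fin M) := ⟨⟨0, by omega⟩⟩
  have hbound := integral_norm_average_grad_sq_le_of_iIndepFun hL x xhat xstar hsmoothP hFP hL2
    (hindep.comp (fun m => dFM m xstar) fun m => hdF_meas m xstar)
    (by simpa [hfP] using hfdef) (by simpa [hdfP] using hdfdef) hmin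
  simp only [Fintype.card_fin, hsecond] at hbound
  rw [hV, hsdif2]
  convert hbound using 2
  field_simp

/-- second-moment bound for the averaged heterogeneous stochastic gradient. -/
theorem average_gradient_bound_heterogeneous {d M : ℕ} (hM : 2 ≤ M) (L : ℝ) (hL : 0 < L) {Z : Type*} [MeasurableSpace Z] {Ω : Type*} [MeasurableSpace Ω]
    (P : Measure Ω) [IsProbabilityMeasure P]
    (D : Fin M → Measure Z) (hD : ∀ m, IsProbabilityMeasure (D m))
    (FM : Fin M → EuclideanSpace ℝ (Fin d) → Z → ℝ) (dFM : Fin M → EuclideanSpace ℝ (Fin d) → Z → EuclideanSpace ℝ (Fin d))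
    (fm : Fin M → EuclideanSpace ℝ (Fin d) → ℝ) (dfm : Fin M → EuclideanSpace ℝ (Fin d) → EuclideanSpace ℝ (Fin d))
    (hsmooth : ∀ m, ∀ᵐ z ∂(D m), SmoothSC L 0 (fun x => FM m x z) (fun x => dFM m x z))
    (hfm : ∀ m x, fm m x = ∫ z, FM m x z ∂(D m))
    (hdfm : ∀ m x, dfm m x = ∫ z, dFM m x z ∂(D m))
    (hFjm : ∀ m, Measurable (fun p : EuclideanSpace ℝ (Fin d) × Z => FM m p.1 p.2))
    (hdFjm : ∀ m, Measurable (fun p : EuclideanSpace ℝ (Fin d) × Z => dFM m p.1 p.2))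
    (hFint : ∀ m x, Integrable (fun z => FM m x z) (D m))
    (hdFsq : ∀ m x, Integrable (fun z => ‖dFM m x z‖ ^ 2) (D m))
    (f : EuclideanSpace ℝ (Fin d) → ℝ) (df : EuclideanSpace ℝ (Fin d) → EuclideanSpace ℝ (Fin d))
    (hfdef : ∀ x, f x = (M : ℝ)⁻¹ * ∑ m, fm m x)
    (hdfdef : ∀ x, df x = (M : ℝ)⁻¹ • ∑ m, dfm m x)
    (xstar : EuclideanSpace ℝ (Fin d)) (hmin : ∀ y, f xstar ≤ f y)
    (z : Fin M → Ω → Z) (hz : ∀ m, Measurable (z m))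
    (hindep : iIndepFun z P)
    (hlaw : ∀ m, P.map (z m) = D m)
    (sdif2 : ℝ)
    (hsdif2 : sdif2 = (M : ℝ)⁻¹ * ∑ m, ∫ w, ‖dFM m xstar w‖ ^ 2 ∂(D m))
    (x : Fin M → EuclideanSpace ℝ (Fin d))
    (xhat : EuclideanSpace ℝ (Fin d)) (hxhat : xhat = (M : ℝ)⁻¹ • ∑ m, x m)
    (Vdev : ℝ) (hV : Vdev = (M : ℝ)⁻¹ * ∑ m, ‖x m - xhat‖ ^ 2) :
    (∫ ω, ‖(M : ℝ)⁻¹ • ∑ m, dFM m (x m) (z m ω)‖ ^ 2 ∂P) ≤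
      2 * L ^ 2 * Vdev + 8 * L * Breg f df xhat xstar + 4 * sdif2 / M :=
  average_gradient_bound_heterogeneous_general hM L hL P D FM dFM fm dfm hsmooth hfm hdfm hdFjm
    hFint hdFsq f df hfdef hdfdef xstar hmin z hz hindep hlaw sdif2 hsdif2 x xhat Vdev hV
end Bregman
end

section
/- Let f_1, ..., f_M : ℝ^d → ℝ each be L-smooth and μ-strongly convex (μ ≥ 0), let f = (1/M) Σ_m f_m with minimizer x_*, let x^1, ..., x^M ∈ ℝ^d with average x̂ and V = (1/M) Σ_m ‖x^m - x̂‖². Then -(2/M) Σ_{m=1}^M ⟨x̂ - x_*, ∇f_m(x^m)⟩ ≤ -2(f(x̂) - f(x_*)) - μ‖x̂ - x_*‖² + L·V. -/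
open MeasureTheory ProbabilityTheory Finset
open scoped InnerProductSpace

/-! Subtracting the strong-convexity lower bound at `(x_*, x^m)` from the smoothness upper bound
at `(x̂, x^m)` bounds `⟪x̂ - x_*, ∇f_m(x^m)⟫` from below by `f_m(x̂) - f_m(x_*)`, up to the
quadratic terms `(μ/2)‖x^m - x_*‖²` and `(L/2)‖x^m - x̂‖²`. Averaging over `m` turns the last
term into `L/2 · V`, and Jensen's inequality `‖x̂ - x_*‖² ≤ (1/M) Σ_m ‖x^m - x_*‖²` handles the
strong-convexity term. -/

theorem SmoothSC.sub_add_sq_le_inner {d : ℕ} {L μ : ℝ} {f : EuclideanSpace ℝ (Fin d) → ℝ}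
    {df : EuclideanSpace ℝ (Fin d) → EuclideanSpace ℝ (Fin d)} (h : SmoothSC L μ f df)
    (x y z : EuclideanSpace ℝ (Fin d)) :
    f x - f y + μ / 2 * ‖z - y‖ ^ 2 - L / 2 * ‖z - x‖ ^ 2 ≤ ⟪x - y, df z⟫_ℝ := by
  have hlower := (h y z).1
  have hupper := (h x z).2
  rw [norm_sub_rev] at hlower hupper
  have hsplit : ⟪x - y, df z⟫_ℝ = ⟪df z, x - z⟫_ℝ - ⟪df z, y - z⟫_ℝ := by
    rw [← inner_sub_right, real_inner_comm, sub_sub_sub_cancel_right]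
  linarith

theorem norm_sum_sq_le_card_mul {ι E : Type*} [SeminormedAddCommGroup E] (s : Finset ι)
    (v : ι → E) : ‖∑ i ∈ s, v i‖ ^ 2 ≤ #s * ∑ i ∈ s, ‖v i‖ ^ 2 :=
  calc ‖∑ i ∈ s, v i‖ ^ 2 ≤ (∑ i ∈ s, ‖v i‖) ^ 2 := by gcongr; exact norm_sum_le s v
    _ ≤ #s * ∑ i ∈ s, ‖v i‖ ^ 2 := sq_sum_le_card_mul_sum_sq

theorem norm_mean_sub_sq_le {ι E : Type*} [SeminormedAddCommGroup E] [NormedSpace ℝ E]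
    {s : Finset ι} (hs : s.Nonempty) (x : ι → E) (y : E) :
    ‖(#s : ℝ)⁻¹ • ∑ i ∈ s, x i - y‖ ^ 2 ≤ (#s : ℝ)⁻¹ * ∑ i ∈ s, ‖x i - y‖ ^ 2 := by
  have hcard : (0 : ℝ) < #s := by exact_mod_cast hs.card_pos
  have hmean : (#s : ℝ)⁻¹ • ∑ i ∈ s, x i - y = (#s : ℝ)⁻¹ • ∑ i ∈ s, (x i - y) := by
    rw [sum_sub_distrib, sum_const, smul_sub, ← Nat.cast_smul_eq_nsmul ℝ, smul_smul,
      inv_mul_cancel₀ hcard.ne', one_smul]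
  calc ‖(#s : ℝ)⁻¹ • ∑ i ∈ s, x i - y‖ ^ 2 = (#s : ℝ)⁻¹ ^ 2 * ‖∑ i ∈ s, (x i - y)‖ ^ 2 := by
        rw [hmean, norm_smul, mul_pow, Real.norm_of_nonneg (by positivity)]
    _ ≤ (#s : ℝ)⁻¹ ^ 2 * (#s * ∑ i ∈ s, ‖x i - y‖ ^ 2) := by
        gcongr; exact norm_sum_sq_le_card_mul s _
    _ = (#s : ℝ)⁻¹ * ∑ i ∈ s, ‖x i - y‖ ^ 2 := by field_simp

theorem inner_product_bound_general {d M : ℕ} (hM : 0 < M)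
    (L μ : ℝ) (hμ : 0 ≤ μ)
    (fm : Fin M → EuclideanSpace ℝ (Fin d) → ℝ) (dfm : Fin M → EuclideanSpace ℝ (Fin d) → EuclideanSpace ℝ (Fin d))
    (hfm : ∀ m, SmoothSC L μ (fm m) (dfm m))
    (f : EuclideanSpace ℝ (Fin d) → ℝ) (hfdef : ∀ x, f x = (M : ℝ)⁻¹ * ∑ m, fm m x)
    (xstar : EuclideanSpace ℝ (Fin d))
    (x : Fin M → EuclideanSpace ℝ (Fin d))
    (xhat : EuclideanSpace ℝ (Fin d)) (hxhat : xhat = (M : ℝ)⁻¹ • ∑ m, x m)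
    (Vdev : ℝ) (hV : Vdev = (M : ℝ)⁻¹ * ∑ m, ‖x m - xhat‖ ^ 2) :
    -(2 / M) * ∑ m, ⟪xhat - xstar, dfm m (x m)⟫_ℝ ≤
      -2 * (f xhat - f xstar) - μ * ‖xhat - xstar‖ ^ 2 + L * Vdev := by
  have hsum : ∑ m, fm m xhat - ∑ m, fm m xstar + μ / 2 * ∑ m, ‖x m - xstar‖ ^ 2
      - L / 2 * ∑ m, ‖x m - xhat‖ ^ 2 ≤ ∑ m, ⟪xhat - xstar, dfm m (x m)⟫_ℝ := by
    rw [mul_sum, mul_sum, ← sum_sub_distrib, ← sum_add_distrib, ← sum_sub_distrib]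
    exact sum_le_sum fun m _ => (hfm m).sub_add_sq_le_inner xhat xstar (x m)
  have hjensen : ‖xhat - xstar‖ ^ 2 ≤ (M : ℝ)⁻¹ * ∑ m, ‖x m - xstar‖ ^ 2 := by
    have : Nonempty (Fin M) := ⟨⟨0, hM⟩⟩
    simpa [hxhat] using norm_mean_sub_sq_le univ_nonempty x xstar
  rw [hfdef, hfdef, hV]
  linear_combination (2 / M) * hsum + μ * hjensen

/-- inner product bound, heterogeneous data (deterministic). -/
theorem inner_product_bound {d M : ℕ} (hM : 0 < M)
    (L μ : ℝ) (hL : 0 < L) (hμ : 0 ≤ μ)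
    (fm : Fin M → EuclideanSpace ℝ (Fin d) → ℝ) (dfm : Fin M → EuclideanSpace ℝ (Fin d) → EuclideanSpace ℝ (Fin d))
    (hfm : ∀ m, SmoothSC L μ (fm m) (dfm m))
    (f : EuclideanSpace ℝ (Fin d) → ℝ) (hfdef : ∀ x, f x = (M : ℝ)⁻¹ * ∑ m, fm m x)
    (xstar : EuclideanSpace ℝ (Fin d)) (hmin : ∀ y, f xstar ≤ f y)
    (x : Fin M → EuclideanSpace ℝ (Fin d))
    (xhat : EuclideanSpace ℝ (Fin d)) (hxhat : xhat = (M : ℝ)⁻¹ • ∑ m, x m)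
    (Vdev : ℝ) (hV : Vdev = (M : ℝ)⁻¹ * ∑ m, ‖x m - xhat‖ ^ 2) :
    -(2 / M) * ∑ m, ⟪xhat - xstar, dfm m (x m)⟫_ℝ ≤
      -2 * (f xhat - f xstar) - μ * ‖xhat - xstar‖ ^ 2 + L * Vdev :=
  inner_product_bound_general hM L μ hμ fm dfm hfm f hfdef xstar x xhat hxhat Vdev hV
end
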